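/- No nonzero real linear combination a T₁ + b T₂ of the alternating trilinear forms T₁ and T₂ on so(3,1) is a Chevalley–Eilenberg 3-coboundary: if there exists an alternating bilinear form β : so(3,1)² → ℝ with a T₁ + b T₂ = dβ, then a = b = 0. -/

import Mathlib

/-!
Let `rot i`, `boost i` be the standard rotation and boost generators of `so(3,1)`. The
rotations close cyclically under the bracket, so `dβ` vanishes on `(rot 0, rot 1, rot 2)` for
every alternating `β`, whereas `T₁` takes the value `-2` and `T₂` the value `0` there; hence
`a = 0`. Expanding `dβ` with the bracket table gives
`dβ(boost 0, boost 1, boost 2) = ∑ i, dβ(rot i, rot (i+1), boost (i+2))`, whereas `T₂` is `2` on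
the left and `-2` on each triple on the right; hence `b = 0`.
-/

open Matrix

attribute [local instance 100] LieRing.ofAssociativeRing

noncomputable section

/-- The Minkowski metric `η = diag(−1,1,1,1)`. -/
def eta : Matrix (Fin 4) (Fin 4) ℝ := Matrix.diagonal ![-1, 1, 1, 1]

/-- The real Lie algebra `so(3,1)`: 4×4 real matrices `A` with `Aᵀη + ηA = 0`
(skew-adjoint with respect to `η`), with the matrix commutator as bracket. -/
def so31 : LieSubalgebra ℝ (Matrix (Fin 4) (Fin 4) ℝ) :=
  skewAdjointMatricesLieSubalgebra eta

/-- The totally antisymmetric symbol `ε` with `ε^{0123} = 1` (realized as the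
determinant of the corresponding rows of the identity matrix). -/
def eps (a b c d : Fin 4) : ℝ :=
  Matrix.det (Matrix.of fun i j => if ![a, b, c, d] i = j then (1 : ℝ) else 0)

/-- The trilinear form `T₁(A,B,C) = tr(A[B,C])` on `so(3,1)`. -/
def T1 (A B C : so31) : ℝ :=
  Matrix.trace ((A : Matrix (Fin 4) (Fin 4) ℝ) *
    ((B : Matrix (Fin 4) (Fin 4) ℝ) * (C : Matrix (Fin 4) (Fin 4) ℝ) -
     (C : Matrix (Fin 4) (Fin 4) ℝ) * (B : Matrix (Fin 4) (Fin 4) ℝ)))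

/-- The trilinear form
`T₂(A,B,C) = Σ_{a,b,c,d,e,f} ε^{abcd} η^{ef} (ηA)_{ab} (ηB)_{ce} (ηC)_{df}`
on `so(3,1)` (here `η^{ef}` are the entries of `η⁻¹ = η`). -/
def T2 (A B C : so31) : ℝ :=
  ∑ a, ∑ b, ∑ c, ∑ d, ∑ e, ∑ f,
    eps a b c d * eta e f * (eta * (A : Matrix (Fin 4) (Fin 4) ℝ)) a b *
      (eta * (B : Matrix (Fin 4) (Fin 4) ℝ)) c e *
      (eta * (C : Matrix (Fin 4) (Fin 4) ℝ)) d f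

/-- The Chevalley–Eilenberg differential (trivial real coefficients) of an
`(m+1)`-cochain:
`(dc)(x₀,…,x_{m+1}) = Σ_{i<j} (−1)^{i+j} c([x_i,x_j], x₀,…,x̂_i,…,x̂_j,…,x_{m+1})`. -/
def ceDiff {g : Type*} [LieRing g] {m : ℕ}
    (c : (Fin (m + 1) → g) → ℝ) : (Fin (m + 2) → g) → ℝ :=
  fun x => ∑ i : Fin (m + 2), ∑ j : Fin (m + 2),
    if hij : i < j then
      (-1 : ℝ) ^ ((i : ℕ) + (j : ℕ)) *
        c (Fin.cons ⁅x i, x j⁆ fun t : Fin m =>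
            x (j.succAbove ((⟨(i : ℕ), by
                have h1 : (i : ℕ) < (j : ℕ) := hij
                have h2 := j.isLt
                omega⟩ : Fin (m + 1)).succAbove t)))
    else 0


lemma ceDiff_apply_three {g : Type*} [LieRing g] (c : (Fin 2 → g) → ℝ) (x : Fin 3 → g) :
    ceDiff c x = -c ![⁅x 0, x 1⁆, x 2] + c ![⁅x 0, x 2⁆, x 1] - c ![⁅x 1, x 2⁆, x 0] := by
  have cons_eq (z : g) (f : Fin 1 → g) : (Fin.cons z f : Fin 2 → g) = ![z, f 0] := by
    ext t; fin_cases t <;> rfl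
  simp only [ceDiff, Fin.sum_univ_succ, Fin.sum_univ_zero, cons_eq]
  simp [Fin.succAbove]
  ring

namespace AlternatingMap

variable {R M N : Type*} [CommRing R] [AddCommGroup M] [Module R M] [AddCommGroup N] [Module R N]

lemma map_vecCons_neg {n : ℕ} (f : M [⋀^Fin n.succ]→ₗ[R] N) (m : Fin n → M) (x : M) :
    f (vecCons (-x) m) = -f (vecCons x m) := by
  simpa using f.map_vecCons_smul m (-1) x

lemma map_swap_fin_two (f : M [⋀^Fin 2]→ₗ[R] N) (x y : M) : f ![y, x] = -f ![x, y] := by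
  have : ![x, y] ∘ Equiv.swap 0 1 = ![y, x] := by
    ext t; fin_cases t <;> rfl
  rw [← this, f.map_swap _ zero_ne_one]

end AlternatingMap

lemma ceDiff_alternatingMap_apply {g : Type*} [LieRing g] [Module ℝ g]
    (β : AlternatingMap ℝ g ℝ (Fin 2)) (x y z : g) :
    ceDiff β ![x, y, z] = -(β ![⁅x, y⁆, z] + β ![⁅y, z⁆, x] + β ![⁅z, x⁆, y]) := by
  rw [ceDiff_apply_three]
  simp only [Matrix.cons_val_zero, Matrix.cons_val_one, Matrix.cons_val_two, Matrix.head_cons,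
    Matrix.tail_cons]
  rw [← lie_skew z x, β.map_vecCons_neg]
  ring

lemma ceDiff_eq_zero_of_lie_cyclic {g : Type*} [LieRing g] [Module ℝ g]
    (β : AlternatingMap ℝ g ℝ (Fin 2)) {x y z : g}
    (hxy : ⁅x, y⁆ = z) (hyz : ⁅y, z⁆ = x) (hzx : ⁅z, x⁆ = y) : ceDiff β ![x, y, z] = 0 := by
  have diag (v : g) : β ![v, v] = 0 :=
    β.map_eq_zero_of_eq ![v, v] (i := 0) (j := 1) rfl zero_ne_one
  rw [ceDiff_alternatingMap_apply, hxy, hyz, hzx, diag, diag, diag]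
  simp

lemma mem_so31_iff {M : Matrix (Fin 4) (Fin 4) ℝ} : M ∈ so31 ↔ Mᵀ * eta = eta * (-M) :=
  mem_skewAdjointMatricesSubmodule eta M

lemma eta_mul_eta : eta * eta = 1 := by
  simp [eta, ← Matrix.diagonal_one, Fin.forall_fin_succ]

lemma eta_transpose : etaᵀ = eta := diagonal_transpose _

/-- The spatial axis `i : Fin 3` is the coordinate `i.succ : Fin 4`; `rot i` and `boost i` are
the generators usually written `J_{i+1}` and `K_{i+1}`. -/
def rot (i : Fin 3) : so31 :=
  ⟨single (i + 2).succ (i + 1).succ 1 - single (i + 1).succ (i + 2).succ 1, by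
    rw [mem_so31_iff]; fin_cases i <;> ext a b <;> fin_cases a <;> fin_cases b <;>
      simp [eta, single_apply, mul_apply]⟩

def boost (i : Fin 3) : so31 :=
  ⟨single 0 i.succ 1 + single i.succ 0 1, by
    rw [mem_so31_iff]; fin_cases i <;> ext a b <;> fin_cases a <;> fin_cases b <;>
      simp [eta, single_apply, mul_apply]⟩

lemma coe_rot (i : Fin 3) : (rot i : Matrix (Fin 4) (Fin 4) ℝ) =
    single (i + 2).succ (i + 1).succ 1 - single (i + 1).succ (i + 2).succ 1 := rfl

lemma coe_boost (i : Fin 3) : (boost i : Matrix (Fin 4) (Fin 4) ℝ) =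
    single 0 i.succ 1 + single i.succ 0 1 := rfl

lemma rot_lie_rot : ⁅rot 0, rot 1⁆ = rot 2 ∧ ⁅rot 1, rot 2⁆ = rot 0 ∧ ⁅rot 2, rot 0⁆ = rot 1 := by
  refine ⟨?_, ?_, ?_⟩ <;> ext1 <;>
    simp [coe_rot, Ring.lie_def, sub_mul, mul_sub, single_mul_single_of_ne]

lemma boost_lie_boost :
    ⁅boost 0, boost 1⁆ = -rot 2 ∧ ⁅boost 1, boost 2⁆ = -rot 0 ∧ ⁅boost 2, boost 0⁆ = -rot 1 := by
  refine ⟨?_, ?_, ?_⟩ <;> ext1 <;>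
    simp [coe_rot, coe_boost, Ring.lie_def, add_mul, mul_add, single_mul_single_of_ne]

lemma rot_lie_boost :
    ⁅rot 0, boost 1⁆ = boost 2 ∧ ⁅rot 1, boost 2⁆ = boost 0 ∧ ⁅rot 2, boost 0⁆ = boost 1 := by
  refine ⟨?_, ?_, ?_⟩ <;> ext1 <;>
    simp [coe_rot, coe_boost, Ring.lie_def, add_mul, mul_add, sub_mul, mul_sub,
      single_mul_single_of_ne, add_comm]

lemma boost_lie_rot :
    ⁅boost 0, rot 1⁆ = boost 2 ∧ ⁅boost 1, rot 2⁆ = boost 0 ∧ ⁅boost 2, rot 0⁆ = boost 1 := by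
  refine ⟨?_, ?_, ?_⟩ <;> ext1 <;>
    simp [coe_rot, coe_boost, Ring.lie_def, add_mul, mul_add, sub_mul, mul_sub,
      single_mul_single_of_ne, add_comm]

/-- Both sides equal `∑ i, β ![rot i, boost i]`. -/
lemma ceDiff_boost_boost_boost (β : AlternatingMap ℝ so31 ℝ (Fin 2)) :
    ceDiff β ![boost 0, boost 1, boost 2] = ∑ i, ceDiff β ![rot i, rot (i + 1), boost (i + 2)] := by
  simp only [Fin.sum_univ_three, Fin.reduceAdd, ceDiff_alternatingMap_apply, rot_lie_rot,
    boost_lie_boost, rot_lie_boost, boost_lie_rot, β.map_vecCons_neg]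
  rw [β.map_swap_fin_two (rot 0), β.map_swap_fin_two (rot 1), β.map_swap_fin_two (rot 2)]
  ring

lemma T1_eq_trace_mul_lie (A B C : so31) :
    T1 A B C =
      trace ((A : Matrix (Fin 4) (Fin 4) ℝ) * ((⁅B, C⁆ : so31) : Matrix (Fin 4) (Fin 4) ℝ)) := by
  rw [LieSubalgebra.coe_bracket, Ring.lie_def]
  rfl

lemma T1_rot_rot_rot : T1 (rot 0) (rot 1) (rot 2) = -2 := by
  rw [T1_eq_trace_mul_lie, rot_lie_rot.2.1, coe_rot]
  simp [sub_mul, mul_sub, single_mul_single_of_ne, trace_sub]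
  norm_num

lemma Matrix.sum_sum_mul_mul_eq_mul_mul_transpose {n R : Type*} [Fintype n] [CommSemiring R]
    (M P Q : Matrix n n R) (c d : n) :
    ∑ e, ∑ f, M e f * P c e * Q d f = (P * M * Qᵀ) c d := by
  simp only [mul_apply, transpose_apply, Finset.sum_mul]
  rw [Finset.sum_comm]
  exact Finset.sum_congr rfl fun _ _ => Finset.sum_congr rfl fun _ _ => by ring

lemma T2_eq_neg_sum_eps (A B C : so31) : T2 A B C =
    -∑ a, ∑ b, ∑ c, ∑ d, eps a b c d * (eta * (A : Matrix (Fin 4) (Fin 4) ℝ)) a b *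
      (eta * ((B : Matrix (Fin 4) (Fin 4) ℝ) * C)) c d := by
  have inner : eta * (B : Matrix (Fin 4) (Fin 4) ℝ) * eta * (eta * (C : Matrix (Fin 4) (Fin 4) ℝ))ᵀ
      = -(eta * ((B : Matrix (Fin 4) (Fin 4) ℝ) * C)) := by
    rw [transpose_mul, eta_transpose, mem_so31_iff.1 C.2]
    simp only [mul_neg, Matrix.mul_assoc, ← Matrix.mul_assoc eta eta, eta_mul_eta, Matrix.one_mul]
  simp only [← Finset.sum_neg_distrib, T2]
  refine Finset.sum_congr rfl fun a _ => Finset.sum_congr rfl fun b _ =>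
    Finset.sum_congr rfl fun c _ => Finset.sum_congr rfl fun d _ => ?_
  rw [← mul_neg, ← neg_apply, ← inner, ← Matrix.sum_sum_mul_mul_eq_mul_mul_transpose,
    Finset.mul_sum]
  refine Finset.sum_congr rfl fun e _ => ?_
  rw [Finset.mul_sum]
  exact Finset.sum_congr rfl fun f _ => by ring

lemma T2_rot_rot_rot : T2 (rot 0) (rot 1) (rot 2) = 0 := by
  simp [T2_eq_neg_sum_eps, coe_rot, eta, Fin.sum_univ_four, single_apply, mul_apply]
  simp [eps, Matrix.det_succ_row_zero, Fin.sum_univ_succ, Fin.succAbove]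

lemma T2_boost_boost_boost : T2 (boost 0) (boost 1) (boost 2) = 2 := by
  simp [T2_eq_neg_sum_eps, coe_boost, eta, Fin.sum_univ_four, single_apply, mul_apply]
  simp [eps, Matrix.det_succ_row_zero, Fin.sum_univ_succ, Fin.succAbove]
  norm_num

lemma T2_rot_rot_boost (i : Fin 3) : T2 (rot i) (rot (i + 1)) (boost (i + 2)) = -2 := by
  fin_cases i <;>
    simp [T2_eq_neg_sum_eps, coe_rot, coe_boost, eta, Fin.sum_univ_four, single_apply,
      mul_apply] <;>
    simp [eps, Matrix.det_succ_row_zero, Fin.sum_univ_succ, Fin.succAbove] <;> norm_num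

/-- no nonzero real linear combination `a T₁ + b T₂` is a
Chevalley–Eilenberg 3-coboundary: if there is an alternating bilinear form
`β : so(3,1)² → ℝ` with `a T₁ + b T₂ = dβ`, then `a = b = 0`. -/
theorem no_combination_is_coboundary (a b : ℝ)
    (β : AlternatingMap ℝ so31 ℝ (Fin 2))
    (h : ∀ x : Fin 3 → so31,
      a * T1 (x 0) (x 1) (x 2) + b * T2 (x 0) (x 1) (x 2) = ceDiff (⇑β) x) :
    a = 0 ∧ b = 0 := by
  have ha : a = 0 := by
    have hJ := h ![rot 0, rot 1, rot 2]
    rw [ceDiff_eq_zero_of_lie_cyclic β rot_lie_rot.1 rot_lie_rot.2.1 rot_lie_rot.2.2] at hJ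
    simpa [T1_rot_rot_rot, T2_rot_rot_rot] using hJ
  subst ha
  have hK := h ![boost 0, boost 1, boost 2]
  rw [ceDiff_boost_boost_boost,
    ← Finset.sum_congr rfl fun i _ => h ![rot i, rot (i + 1), boost (i + 2)]] at hK
  simp [T2_boost_boost_boost, T2_rot_rot_boost] at hK
  exact ⟨rfl, by linarith⟩
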